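/- arXiv:1910.04598 — 3 statements merged into one kernel-verified Lean document; each statement's English description precedes it below -/
import Mathlib

section
/- In the root system B_l (l ≥ 2) with simple roots α₁,…,α_l and Θ = Σ∖{α₁,α₂}, classify positive roots outside ⟨Θ⟩ by their coefficient pair (n₁,n₂) on (α₁,α₂): 𝔪₁ = roots with (1,0), 𝔪₂ = roots with (0,1), 𝔪₃ = roots with (1,1), 𝔪₄ = roots with (1,2). Then: (a) these four sets exhaust the positive roots outside ⟨Θ⟩, i.e. the only coefficient pairs occurring are (1,0),(0,1),(1,1),(1,2); (b) for every triple of positive roots (α, β, α+β) with all three outside ⟨Θ⟩, the distribution of components is (up to swapping α and β) one of: (𝔪₁,𝔪₂,𝔪₃) or (𝔪₂,𝔪₃,𝔪₄). -/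
/-- Positive roots of `B_l`, encoded by their coefficient functions
`c : ℕ → ℕ` on the simple roots `α₁,…,α_l` (indices `1,…,l`; other indices 0).
The positive roots are `λ_j = α_j+⋯+α_l`, `λ_i−λ_j = α_i+⋯+α_{j−1}` (`i<j`)
and `λ_i+λ_j = α_i+⋯+α_{j−1}+2α_j+⋯+2α_l` (`i<j`). -/
def IsPosRootB (l : ℕ) (c : ℕ → ℕ) : Prop :=
  (∃ j, 1 ≤ j ∧ j ≤ l ∧ c = fun k => if j ≤ k ∧ k ≤ l then 1 else 0) ∨
  (∃ i j, 1 ≤ i ∧ i < j ∧ j ≤ l ∧ c = fun k => if i ≤ k ∧ k < j then 1 else 0) ∨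
  (∃ i j, 1 ≤ i ∧ i < j ∧ j ≤ l ∧
    c = fun k => if i ≤ k ∧ k < j then 1 else if j ≤ k ∧ k ≤ l then 2 else 0)

/-!
Reading off the `(α₁, α₂)`-coefficients of the three families of positive roots shows that
the only pairs occurring are `(0,0)`, `(1,0)`, `(0,1)`, `(1,1)` and `(1,2)`, the last one only
for `λ₁ + λ₂`. Coefficients add along `γ = α + β`, and among the nonzero pairs the only sums
that are again nonzero pairs are `(1,0) + (0,1) = (1,1)` and `(0,1) + (1,1) = (1,2)`.
-/

theorem IsPosRootB.coeff_one_two_cases {l : ℕ} {c : ℕ → ℕ} (h : IsPosRootB l c) :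
    (c 1 = 0 ∧ c 2 = 0) ∨ (c 1, c 2) = (1,0) ∨ (c 1, c 2) = (0,1) ∨
      (c 1, c 2) = (1,1) ∨ (c 1, c 2) = (1,2) := by
  rcases h with ⟨j, hj, -, rfl⟩ | ⟨i, j, hi, hij, -, rfl⟩ | ⟨i, j, hi, hij, -, rfl⟩ <;>
    simp only [Prod.mk.injEq] <;> split_ifs <;> omega

theorem stmt9_general (l : ℕ) :
    (∀ c : ℕ → ℕ, IsPosRootB l c → ¬(c 1 = 0 ∧ c 2 = 0) →
      (c 1, c 2) = (1,0) ∨ (c 1, c 2) = (0,1) ∨ (c 1, c 2) = (1,1) ∨ (c 1, c 2) = (1,2)) ∧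
    (∀ α β γ : ℕ → ℕ, IsPosRootB l α → IsPosRootB l β → IsPosRootB l γ →
      γ = (fun k => α k + β k) →
      ¬(α 1 = 0 ∧ α 2 = 0) → ¬(β 1 = 0 ∧ β 2 = 0) → ¬(γ 1 = 0 ∧ γ 2 = 0) →
      ((((α 1, α 2) = (1,0) ∧ (β 1, β 2) = (0,1)) ∨
        ((α 1, α 2) = (0,1) ∧ (β 1, β 2) = (1,0))) ∧ (γ 1, γ 2) = (1,1)) ∨
      ((((α 1, α 2) = (0,1) ∧ (β 1, β 2) = (1,1)) ∨
        ((α 1, α 2) = (1,1) ∧ (β 1, β 2) = (0,1))) ∧ (γ 1, γ 2) = (1,2))) := by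
  refine ⟨fun c hc hc0 => hc.coeff_one_two_cases.resolve_left hc0, ?_⟩
  rintro α β γ hα hβ hγ rfl hα0 hβ0 hγ0
  have hα' := hα.coeff_one_two_cases
  have hβ' := hβ.coeff_one_two_cases
  have hγ' := hγ.coeff_one_two_cases
  simp only [Prod.mk.injEq] at hα' hβ' hγ' hα0 hβ0 hγ0 ⊢
  omega

/-- In `B_l` (`l ≥ 2`) with `Θ = Σ∖{α₁,α₂}`: (a) every positive root outside
`⟨Θ⟩` has `(α₁,α₂)`-coefficient pair `(1,0)`, `(0,1)`, `(1,1)` or `(1,2)`;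
(b) every triple `(α, β, α+β)` of positive roots outside `⟨Θ⟩` distributes,
up to swapping `α` and `β`, as `(𝔪₁,𝔪₂,𝔪₃)` or `(𝔪₂,𝔪₃,𝔪₄)`. -/
theorem stmt9 (l : ℕ) (hl : 2 ≤ l) :
    (∀ c : ℕ → ℕ, IsPosRootB l c → ¬(c 1 = 0 ∧ c 2 = 0) →
      (c 1, c 2) = (1,0) ∨ (c 1, c 2) = (0,1) ∨ (c 1, c 2) = (1,1) ∨ (c 1, c 2) = (1,2)) ∧
    (∀ α β γ : ℕ → ℕ, IsPosRootB l α → IsPosRootB l β → IsPosRootB l γ →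
      γ = (fun k => α k + β k) →
      ¬(α 1 = 0 ∧ α 2 = 0) → ¬(β 1 = 0 ∧ β 2 = 0) → ¬(γ 1 = 0 ∧ γ 2 = 0) →
      ((((α 1, α 2) = (1,0) ∧ (β 1, β 2) = (0,1)) ∨
        ((α 1, α 2) = (0,1) ∧ (β 1, β 2) = (1,0))) ∧ (γ 1, γ 2) = (1,1)) ∨
      ((((α 1, α 2) = (0,1) ∧ (β 1, β 2) = (1,1)) ∨
        ((α 1, α 2) = (1,1) ∧ (β 1, β 2) = (0,1))) ∧ (γ 1, γ 2) = (1,2))) :=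
  stmt9_general l
end

section
/- In the root system C_l with simple roots α₁,…,α_l and fixed p with 1 ≤ p ≤ l−1, set Θ = Σ∖{α_p, α_l} and classify positive roots outside ⟨Θ⟩ by their coefficient pair (n_p, n_l) on (α_p, α_l): 𝔪₁ = roots with (0,1), 𝔪₂ = roots with (1,0), 𝔪₃ = roots with (1,1), 𝔪₄ = roots with (2,1). Then these four sets exhaust the positive roots outside ⟨Θ⟩, and for every triple (α, β, α+β) of positive roots outside ⟨Θ⟩ the component distribution is (up to swap) either (𝔪₁,𝔪₂,𝔪₃) or (𝔪₂,𝔪₃,𝔪₄). -/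
/-!
Every positive root of `C_l` has all coefficients at most `2`, its `α_l`-coefficient at most `1`,
and, when that coefficient vanishes, all coefficients at most `1` (it is then some `λ_i − λ_j`).
This leaves only the pairs `(0,1), (1,0), (1,1), (2,1)` on `(α_p, α_l)`, and since the
`α_l`-coefficients of `α` and `β` add up to at most `1` in `α + β`, the only sums of two such pairs
that are again such a pair are `(0,1) + (1,0)` and `(1,0) + (1,1)`.
-/

/-- Positive roots of `C_l`, encoded by their coefficient functions
`c : ℕ → ℕ` on the simple roots `α₁,…,α_l` (indices `1,…,l`).  The positive
roots are `λ_i−λ_j = α_i+⋯+α_{j−1}` (`i<j`) and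
`λ_i+λ_j = α_i+⋯+α_{j−1}+2α_j+⋯+2α_{l−1}+α_l` (`i≤j`). -/
def IsPosRootC (l : ℕ) (c : ℕ → ℕ) : Prop :=
  (∃ i j, 1 ≤ i ∧ i < j ∧ j ≤ l ∧ c = fun k => if i ≤ k ∧ k < j then 1 else 0) ∨
  (∃ i j, 1 ≤ i ∧ i ≤ j ∧ j ≤ l ∧
    c = fun k => if i ≤ k ∧ k < j then 1
                 else if j ≤ k ∧ k < l then 2
                 else if k = l then 1 else 0)

namespace IsPosRootC

variable {l : ℕ} {c : ℕ → ℕ}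

theorem coeff_le_two (hc : IsPosRootC l c) (k : ℕ) : c k ≤ 2 := by
  rcases hc with ⟨i, j, -, -, -, rfl⟩ | ⟨i, j, -, -, -, rfl⟩ <;> beta_reduce <;> split_ifs <;> omega

theorem coeff_last_le_one (hc : IsPosRootC l c) : c l ≤ 1 := by
  rcases hc with ⟨i, j, -, -, hjl, rfl⟩ | ⟨i, j, -, -, hjl, rfl⟩ <;> beta_reduce <;> split_ifs <;> omega

theorem coeff_le_one_of_coeff_last_eq_zero (hc : IsPosRootC l c) (hl : c l = 0) (k : ℕ) :
    c k ≤ 1 := by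
  rcases hc with ⟨i, j, -, -, -, rfl⟩ | ⟨i, j, -, -, -, rfl⟩
  · beta_reduce; split_ifs <;> omega
  · simp at hl

theorem coeff_pair_cases (hc : IsPosRootC l c) (k : ℕ) (hne : ¬(c k = 0 ∧ c l = 0)) :
    (c k, c l) = (0, 1) ∨ (c k, c l) = (1, 0) ∨ (c k, c l) = (1, 1) ∨ (c k, c l) = (2, 1) := by
  have h₂ := hc.coeff_le_two k
  have h₁ := hc.coeff_last_le_one
  have h₀ := hc.coeff_le_one_of_coeff_last_eq_zero (k := k)
  simp only [Prod.mk.injEq]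
  omega

end IsPosRootC

theorem stmt10_general (l p : ℕ) :
    (∀ c : ℕ → ℕ, IsPosRootC l c → ¬(c p = 0 ∧ c l = 0) →
      (c p, c l) = (0,1) ∨ (c p, c l) = (1,0) ∨ (c p, c l) = (1,1) ∨ (c p, c l) = (2,1)) ∧
    (∀ α β γ : ℕ → ℕ, IsPosRootC l α → IsPosRootC l β → IsPosRootC l γ →
      γ = (fun k => α k + β k) →
      ¬(α p = 0 ∧ α l = 0) → ¬(β p = 0 ∧ β l = 0) → ¬(γ p = 0 ∧ γ l = 0) →
      ((((α p, α l) = (0,1) ∧ (β p, β l) = (1,0)) ∨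
        ((α p, α l) = (1,0) ∧ (β p, β l) = (0,1))) ∧ (γ p, γ l) = (1,1)) ∨
      ((((α p, α l) = (1,0) ∧ (β p, β l) = (1,1)) ∨
        ((α p, α l) = (1,1) ∧ (β p, β l) = (1,0))) ∧ (γ p, γ l) = (2,1))) := by
  refine ⟨fun c hc hne => hc.coeff_pair_cases p hne, ?_⟩
  rintro α β γ hα hβ hγ rfl hαne hβne hγne
  have hα' := hα.coeff_pair_cases p hαne
  have hβ' := hβ.coeff_pair_cases p hβne
  have hγ' := hγ.coeff_pair_cases p hγne
  simp only [Prod.mk.injEq] at hα' hβ' hγ' ⊢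
  omega

/-- In `C_l` with `Θ = Σ∖{α_p, α_l}` (`1 ≤ p ≤ l−1`): every positive root
outside `⟨Θ⟩` has `(α_p,α_l)`-coefficient pair `(0,1)` (`𝔪₁`), `(1,0)` (`𝔪₂`),
`(1,1)` (`𝔪₃`) or `(2,1)` (`𝔪₄`), and every triple `(α, β, α+β)` of positive
roots outside `⟨Θ⟩` distributes, up to swapping `α` and `β`, as `(𝔪₁,𝔪₂,𝔪₃)`
or `(𝔪₂,𝔪₃,𝔪₄)`. -/
theorem stmt10 (l p : ℕ) (hp : 1 ≤ p) (hpl : p ≤ l - 1) (hl : 2 ≤ l) :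
    (∀ c : ℕ → ℕ, IsPosRootC l c → ¬(c p = 0 ∧ c l = 0) →
      (c p, c l) = (0,1) ∨ (c p, c l) = (1,0) ∨ (c p, c l) = (1,1) ∨ (c p, c l) = (2,1)) ∧
    (∀ α β γ : ℕ → ℕ, IsPosRootC l α → IsPosRootC l β → IsPosRootC l γ →
      γ = (fun k => α k + β k) →
      ¬(α p = 0 ∧ α l = 0) → ¬(β p = 0 ∧ β l = 0) → ¬(γ p = 0 ∧ γ l = 0) →
      ((((α p, α l) = (0,1) ∧ (β p, β l) = (1,0)) ∨
        ((α p, α l) = (1,0) ∧ (β p, β l) = (0,1))) ∧ (γ p, γ l) = (1,1)) ∨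
      ((((α p, α l) = (1,0) ∧ (β p, β l) = (1,1)) ∨
        ((α p, α l) = (1,1) ∧ (β p, β l) = (1,0))) ∧ (γ p, γ l) = (2,1))) :=
  stmt10_general l p
end

section
/- In the root system D_l (l ≥ 4) with simple roots α₁,…,α_l and Θ = Σ∖{α_{l−1}, α_l}, classify positive roots outside ⟨Θ⟩ by their coefficient pair (n_{l−1}, n_l) on (α_{l−1}, α_l): 𝔪₁ = roots with (1,0), 𝔪₂ = roots with (0,1), 𝔪₃ = roots with (1,1). Then these three sets exhaust the positive roots outside ⟨Θ⟩, and for every triple of positive roots (α, β, α+β) all lying outside ⟨Θ⟩, necessarily (up to swapping α and β) α ∈ 𝔪₁, β ∈ 𝔪₂ and α+β ∈ 𝔪₃. -/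
/-!
The coefficients of a positive root of `D_l` on the two end nodes `α_{l−1}`, `α_l` of the fork
are at most `1`, so the coefficient pair of a root outside `⟨Θ⟩` is `(1,0)`, `(0,1)` or `(1,1)`.
If `α`, `β` and `α + β` all lie outside `⟨Θ⟩`, the pair of `α + β` is the sum of two nonzero
pairs and still has entries at most `1`; this forces `{(1,0), (0,1)}` for `α`, `β`.
-/

/-- Positive roots of `D_l` (`l ≥ 4`), encoded by their coefficient functions
`c : ℕ → ℕ` on the simple roots `α₁,…,α_l` (indices `1,…,l`).  The positive
roots are `λ_i−λ_j = α_i+⋯+α_{j−1}` (`i<j≤l`),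
`λ_i+λ_l = α_i+⋯+α_{l−2}+α_l` (`i<l`), and
`λ_i+λ_j = α_i+⋯+α_{j−1}+2α_j+⋯+2α_{l−2}+α_{l−1}+α_l` (`i<j≤l−1`). -/
def IsPosRootD (l : ℕ) (c : ℕ → ℕ) : Prop :=
  (∃ i j, 1 ≤ i ∧ i < j ∧ j ≤ l ∧ c = fun k => if i ≤ k ∧ k < j then 1 else 0) ∨
  (∃ i, 1 ≤ i ∧ i < l ∧
    c = fun k => if i ≤ k ∧ k ≤ l - 2 then 1 else if k = l then 1 else 0) ∨
  (∃ i j, 1 ≤ i ∧ i < j ∧ j ≤ l - 1 ∧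
    c = fun k => if i ≤ k ∧ k < j then 1
                 else if j ≤ k ∧ k ≤ l - 2 then 2
                 else if k = l - 1 ∨ k = l then 1 else 0)

theorem IsPosRootD.coeff_le_one {l : ℕ} {c : ℕ → ℕ} (h : IsPosRootD l c) :
    c (l - 1) ≤ 1 ∧ c l ≤ 1 := by
  rcases h with ⟨i, j, -, -, -, rfl⟩ | ⟨i, -, -, rfl⟩ | ⟨i, j, hi, hij, hj, rfl⟩ <;>
    constructor <;> dsimp only <;> split_ifs <;> omega

theorem stmt11_general (l : ℕ) :
    (∀ c : ℕ → ℕ, IsPosRootD l c → ¬(c (l-1) = 0 ∧ c l = 0) →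
      (c (l-1), c l) = (1,0) ∨ (c (l-1), c l) = (0,1) ∨ (c (l-1), c l) = (1,1)) ∧
    (∀ α β γ : ℕ → ℕ, IsPosRootD l α → IsPosRootD l β → IsPosRootD l γ →
      γ = (fun k => α k + β k) →
      ¬(α (l-1) = 0 ∧ α l = 0) → ¬(β (l-1) = 0 ∧ β l = 0) →
      ¬(γ (l-1) = 0 ∧ γ l = 0) →
      (((α (l-1), α l) = (1,0) ∧ (β (l-1), β l) = (0,1)) ∨
        ((α (l-1), α l) = (0,1) ∧ (β (l-1), β l) = (1,0))) ∧
        (γ (l-1), γ l) = (1,1)) := by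
  refine ⟨fun c hc hc0 => ?_, fun α β γ hα hβ hγ hsum hα0 hβ0 _ => ?_⟩
  · have hc1 := hc.coeff_le_one
    simp only [Prod.mk.injEq]
    omega
  · have hα1 := hα.coeff_le_one
    have hβ1 := hβ.coeff_le_one
    have hγ1 := hγ.coeff_le_one
    simp only [hsum, Prod.mk.injEq] at hγ1 ⊢
    omega

/-- In `D_l` (`l ≥ 4`) with `Θ = Σ∖{α_{l−1}, α_l}`: every positive root
outside `⟨Θ⟩` has `(α_{l−1},α_l)`-coefficient pair `(1,0)` (`𝔪₁`), `(0,1)`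
(`𝔪₂`) or `(1,1)` (`𝔪₃`), and for every triple `(α, β, α+β)` of positive roots
outside `⟨Θ⟩`, necessarily (up to swapping `α` and `β`) `α ∈ 𝔪₁`, `β ∈ 𝔪₂`
and `α+β ∈ 𝔪₃`. -/
theorem stmt11 (l : ℕ) (hl : 4 ≤ l) :
    (∀ c : ℕ → ℕ, IsPosRootD l c → ¬(c (l-1) = 0 ∧ c l = 0) →
      (c (l-1), c l) = (1,0) ∨ (c (l-1), c l) = (0,1) ∨ (c (l-1), c l) = (1,1)) ∧
    (∀ α β γ : ℕ → ℕ, IsPosRootD l α → IsPosRootD l β → IsPosRootD l γ →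
      γ = (fun k => α k + β k) →
      ¬(α (l-1) = 0 ∧ α l = 0) → ¬(β (l-1) = 0 ∧ β l = 0) →
      ¬(γ (l-1) = 0 ∧ γ l = 0) →
      (((α (l-1), α l) = (1,0) ∧ (β (l-1), β l) = (0,1)) ∨
        ((α (l-1), α l) = (0,1) ∧ (β (l-1), β l) = (1,0))) ∧
        (γ (l-1), γ l) = (1,1)) :=
  stmt11_general l
end
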